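/- arXiv:1810.03252 — 2 statements merged into one kernel-verified Lean document; each statement's English description precedes it below -/
import Mathlib

section
/- For every i = 0, …, n one has the identity S'_{2i} − (φ_{2i}/α_{2i}) · S'_{2i+1} = 1 − β'₀/q. -/
/-!
With `r m = φ (x + m) / α (x + m)` and `P m = ∏_{k<m} r k`, the `j`-th terms of
`S'_x` and `r 0 · S'_{x+1}` are `P (2j) + P (2j+1)` and `P (2j+1) + P (2j+2)`, so the
difference telescopes to `P 0 - P (2n+2) = 1 - β'₀ / q`: the last product runs once around
`ZMod (2n+2)`.
-/

open Finset

/-- `S'_x` (the same formula covers both even and odd indices `x` of `ZMod (2n+2)`):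
for `x = 2i` this is `S'_{2i}` and for `x = 2i+1` this is `S'_{2i+1}`. -/
noncomputable def Sp (n : ℕ) {K : Type*} [Field K] (α φ : ZMod (2*n+2) → K)
    (x : ZMod (2*n+2)) : K :=
  ∑ j ∈ range (n+1),
    (∏ k ∈ range j, (φ (x + 2*k) / α (x + 2*k)) * (φ (x + 2*k + 1) / α (x + 2*k + 1)))
      * (1 + φ (x + 2*j) / α (x + 2*j))

theorem Finset.prod_range_two_mul {M : Type*} [CommMonoid M] (f : ℕ → M) (j : ℕ) :
    ∏ k ∈ range (2 * j), f k = ∏ k ∈ range j, f (2 * k) * f (2 * k + 1) := by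
  induction j with
  | zero => simp
  | succ j ih =>
    rw [Nat.mul_succ, prod_range_succ, prod_range_succ, prod_range_succ, ih, mul_assoc]

theorem sum_sub_mul_sum_shift_eq_one_sub_prod {R : Type*} [CommRing R] (f : ℕ → R) (N : ℕ) :
    ∑ j ∈ range N, (∏ k ∈ range (2 * j), f k) * (1 + f (2 * j))
      - f 0 * ∑ j ∈ range N, (∏ k ∈ range (2 * j), f (k + 1)) * (1 + f (2 * j + 1))
      = 1 - ∏ k ∈ range (2 * N), f k := by
  induction N with
  | zero => simp
  | succ N ih =>
    have hshift : f 0 * ∏ k ∈ range (2 * N), f (k + 1) = ∏ k ∈ range (2 * N + 1), f k := by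
      rw [prod_range_succ', mul_comm]
    have hodd := prod_range_succ f (2 * N)
    have heven : ∏ k ∈ range (2 * (N + 1)), f k = (∏ k ∈ range (2 * N + 1), f k) * f (2 * N + 1) :=
      prod_range_succ f (2 * N + 1)
    rw [sum_range_succ, sum_range_succ]
    linear_combination ih - hodd - (1 + f (2 * N + 1)) * hshift + heven

theorem ZMod.prod_range_natCast (N : ℕ) [NeZero N] {M : Type*} [CommMonoid M]
    (f : ZMod N → M) : ∏ k ∈ range N, f k = ∏ z : ZMod N, f z :=
  prod_nbij' (fun k : ℕ => (k : ZMod N)) ZMod.val (fun _ _ => mem_univ _)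
    (fun z _ => mem_range.2 z.val_lt) (fun _ hk => ZMod.val_cast_of_lt (mem_range.1 hk))
    (fun z _ => ZMod.natCast_zmod_val z) (fun _ _ => rfl)

theorem ZMod.prod_range_add_natCast (N : ℕ) [NeZero N] {M : Type*} [CommMonoid M]
    (f : ZMod N → M) (x : ZMod N) : ∏ k ∈ range N, f (x + k) = ∏ z : ZMod N, f z := by
  rw [ZMod.prod_range_natCast N (fun z => f (x + z))]
  exact Equiv.prod_comp (Equiv.addLeft x) f

section Sp

variable {n : ℕ} {K : Type*} [Field K] (α φ : ZMod (2 * n + 2) → K)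

theorem Sp_eq_sum_prod_range (x : ZMod (2 * n + 2)) :
    Sp n α φ x = ∑ j ∈ range (n + 1), (∏ k ∈ range (2 * j), φ (x + k) / α (x + k))
      * (1 + φ (x + (2 * j : ℕ)) / α (x + (2 * j : ℕ))) := by
  refine sum_congr rfl fun j _ => ?_
  rw [prod_range_two_mul]
  push_cast
  simp only [add_assoc]

theorem prod_range_add_div_eq (x : ZMod (2 * n + 2)) :
    ∏ k ∈ range (2 * n + 2), φ (x + k) / α (x + k)
      = (∏ i ∈ range (n + 1), φ (2 * i) * φ (2 * i + 1))
        / ∏ i ∈ range (2 * n + 2), α (i : ZMod (2 * n + 2)) := by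
  have hφ : ∏ i ∈ range (n + 1), φ (2 * i) * φ (2 * i + 1)
      = ∏ k ∈ range (2 * n + 2), φ (k : ZMod (2 * n + 2)) := by
    have hpairs := prod_range_two_mul (fun k : ℕ => φ (k : ZMod (2 * n + 2))) (n + 1)
    rw [show 2 * (n + 1) = 2 * n + 2 by ring] at hpairs
    rw [hpairs]
    push_cast
    rfl
  rw [prod_div_distrib, hφ, ZMod.prod_range_add_natCast, ZMod.prod_range_add_natCast,
    ZMod.prod_range_natCast, ZMod.prod_range_natCast]

end Sp

theorem stmt3_general (n : ℕ) (K : Type*) [Field K]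
    (α φ : ZMod (2*n+2) → K)
    (q β'₀ : K)
    (hq : q = ∏ i ∈ range (2*n+2), α (i : ZMod (2*n+2)))
    (hβ'₀ : β'₀ = ∏ i ∈ range (n+1), φ (2*i) * φ (2*i+1)) :
    ∀ i : ℕ, i ≤ n →
      Sp n α φ (2*i) - (φ (2*i) / α (2*i)) * Sp n α φ (2*i+1) = 1 - β'₀ / q := by
  intro i _
  set x : ZMod (2 * n + 2) := 2 * i
  have hshift : ∀ m : ℕ, x + 1 + m = x + (m + 1 : ℕ) := fun m => by push_cast; ring
  have key := sum_sub_mul_sum_shift_eq_one_sub_prod (fun m : ℕ => φ (x + m) / α (x + m)) (n + 1)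
  rw [show 2 * (n + 1) = 2 * n + 2 by ring, prod_range_add_div_eq, ← hq, ← hβ'₀] at key
  rw [Sp_eq_sum_prod_range, Sp_eq_sum_prod_range]
  simpa only [Nat.cast_zero, add_zero, hshift] using key

/-- `S'_{2i} - (φ_{2i}/α_{2i}) S'_{2i+1} = 1 - β'₀/q` for `i = 0, …, n`,
where `q = ∏_{i=0}^{2n+1} α_i` and `β'₀ = ∏_{i=0}^{n} φ_{2i} φ_{2i+1}`. -/
theorem stmt3 (n : ℕ) (hn : 1 ≤ n) (K : Type*) [Field K]
    (α φ : ZMod (2*n+2) → K) (hα : ∀ i, α i ≠ 0) (hφ : ∀ i, φ i ≠ 0)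
    (q β'₀ : K)
    (hq : q = ∏ i ∈ range (2*n+2), α (i : ZMod (2*n+2)))
    (hβ'₀ : β'₀ = ∏ i ∈ range (n+1), φ (2*i) * φ (2*i+1)) :
    ∀ i : ℕ, i ≤ n →
      Sp n α φ (2*i) - (φ (2*i) / α (2*i)) * Sp n α φ (2*i+1) = 1 - β'₀ / q :=
  stmt3_general n K α φ q β'₀ hq hβ'₀
end

section
/- For every i ∈ ℤ/(2n+2)ℤ, the intertwining relations r_i ∘ π = π ∘ r_{i+1}, r_i ∘ π' = π' ∘ r_{i+1}, and r_i ∘ ρ = ρ ∘ r_{−i} hold as transformations of tuples (α, φ) (with all nonvanishing conditions holding for every intermediate tuple). -/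
/-- The Cartan matrix of type `A_{2n+1}^{(1)}`, with rows and columns indexed by
`ZMod (2n+2)`. -/
def cartan (n : ℕ) (i j : ZMod (2*n+2)) : ℤ :=
  if i = j then 2 else if i = j + 1 ∨ j = i + 1 then -1 else 0

/-- The `α`-component of the simple reflection `r_j`:
`r_j(α)_i = α_i α_j^{-a_{j,i}}`. -/
noncomputable def rα (n : ℕ) {K : Type*} [Field K] (j : ZMod (2*n+2))
    (α : ZMod (2*n+2) → K) : ZMod (2*n+2) → K :=
  fun i => α i * α j ^ (-(cartan n j i))

/-- The `φ`-component of the simple reflection `r_j`: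
`r_j(φ)_i = φ_i α_j^{-δ_{i,j}+δ_{i,j+1}} ((α_j+φ_j)/(1+φ_j))^{δ_{i,j-1}-δ_{i,j+1}}`. -/
noncomputable def rφ (n : ℕ) {K : Type*} [Field K] (j : ZMod (2*n+2))
    (α φ : ZMod (2*n+2) → K) : ZMod (2*n+2) → K :=
  fun i => φ i * α j ^ (((if i = j + 1 then 1 else 0) : ℤ) - ((if i = j then 1 else 0) : ℤ))
    * ((α j + φ j) / (1 + φ j))
        ^ (((if i = j - 1 then 1 else 0) : ℤ) - ((if i = j + 1 then 1 else 0) : ℤ))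

/-- The nonvanishing conditions on a tuple `(α, φ)`:
`α_i ≠ 0`, `φ_i ≠ 0`, `1 + φ_i ≠ 0` and `α_i + φ_i ≠ 0` for all `i`. -/
def Good (n : ℕ) {K : Type*} [Field K] (α φ : ZMod (2*n+2) → K) : Prop :=
  ∀ i, α i ≠ 0 ∧ φ i ≠ 0 ∧ 1 + φ i ≠ 0 ∧ α i + φ i ≠ 0

/-- The Dynkin diagram automorphism `π`: `π(α)_i = α_{i+1}`, `π(φ)_i = φ_{i+1}`. -/
noncomputable def piT (n : ℕ) {K : Type*} [Field K]
    (T : (ZMod (2*n+2) → K) × (ZMod (2*n+2) → K)) :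
    (ZMod (2*n+2) → K) × (ZMod (2*n+2) → K) :=
  (fun i => T.1 (i+1), fun i => T.2 (i+1))

/-- The Dynkin diagram automorphism `π'`: `π'(α)_i = α_{i+1}`, `π'(φ)_i = α_{i+1}/φ_{i+1}`. -/
noncomputable def piT' (n : ℕ) {K : Type*} [Field K]
    (T : (ZMod (2*n+2) → K) × (ZMod (2*n+2) → K)) :
    (ZMod (2*n+2) → K) × (ZMod (2*n+2) → K) :=
  (fun i => T.1 (i+1), fun i => T.1 (i+1) / T.2 (i+1))

/-- The Dynkin diagram automorphism `ρ`: `ρ(α)_i = α_{-i}`, `ρ(φ)_{2i} = α_{-2i}/φ_{-2i}`,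
`ρ(φ)_{2i+1} = φ_{-2i-1}`; since the modulus `2n+2` is even, the parity of an index
`x : ZMod (2n+2)` is detected by `x.val`. -/
noncomputable def rhoT (n : ℕ) {K : Type*} [Field K]
    (T : (ZMod (2*n+2) → K) × (ZMod (2*n+2) → K)) :
    (ZMod (2*n+2) → K) × (ZMod (2*n+2) → K) :=
  (fun i => T.1 (-i), fun x => if Even x.val then T.1 (-x) / T.2 (-x) else T.2 (-x))

/-- The simple reflection `r_j` as a map of tuples `(α, φ)`. -/
noncomputable def rT (n : ℕ) {K : Type*} [Field K] (j : ZMod (2*n+2))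
    (T : (ZMod (2*n+2) → K) × (ZMod (2*n+2) → K)) :
    (ZMod (2*n+2) → K) × (ZMod (2*n+2) → K) :=
  (rα n j T.1, rφ n j T.1 T.2)

/-- The nonvanishing conditions on a tuple `T = (α, φ)`. -/
def GoodT (n : ℕ) {K : Type*} [Field K]
    (T : (ZMod (2*n+2) → K) × (ZMod (2*n+2) → K)) : Prop :=
  ∀ i, T.1 i ≠ 0 ∧ T.2 i ≠ 0 ∧ 1 + T.2 i ≠ 0 ∧ T.1 i + T.2 i ≠ 0

/-! Each relation is checked coordinatewise from explicit formulas for `r_j` at the indices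
`j`, `j + 1`, `j - 1` and elsewhere; these three indices are distinct because `n ≥ 1`.
The relation for `π` is the translation invariance of those formulas. The map `π'` is `π` after
the involution `φ ↦ α / φ`, which commutes with every `r_j` since it turns the factor
`c_j = (α_j + φ_j) / (1 + φ_j)` into `α_j / c_j`. For `ρ`, the reversal `i ↦ -i` exchanges the
roles of `j + 1` and `j - 1` in `r_j`, and this is compensated by applying `φ ↦ α / φ` at every
other index. -/

instance fact_one_lt_two_mul_add_two (n : ℕ) : Fact (1 < 2*n+2) := ⟨by omega⟩

theorem self_ne_sub_one {R : Type*} [Ring R] [Nontrivial R] (j : R) : j ≠ j - 1 := by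
  simp [eq_comm (a := j), sub_eq_self]

def rcoef {ι K : Type*} [Field K] (α φ : ι → K) (j : ι) : K := (α j + φ j) / (1 + φ j)

def dualT {ι M : Type*} [Div M] (T : (ι → M) × (ι → M)) : (ι → M) × (ι → M) :=
  (T.1, T.1 / T.2)

section

variable {n : ℕ} {K : Type*} [Field K]

theorem add_one_ne_sub_one (hn : 1 ≤ n) (j : ZMod (2*n+2)) : j + 1 ≠ j - 1 := by
  intro h
  have h2 : ((2 : ℕ) : ZMod (2*n+2)) = 0 := by
    push_cast; linear_combination h
  rw [ZMod.natCast_eq_zero_iff] at h2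
  have := Nat.le_of_dvd (by norm_num) h2
  omega

theorem even_val_add_one (x : ZMod (2*n+2)) : Even (x + 1).val ↔ ¬ Even x.val := by
  have h : (x + 1).val % 2 = (x.val + 1) % 2 := by
    rw [ZMod.val_add, ZMod.val_one, Nat.mod_mod_of_dvd _ ⟨n+1, by ring⟩]
  rw [Nat.even_iff, Nat.even_iff, h]
  omega

theorem even_val_sub_one (x : ZMod (2*n+2)) : Even (x - 1).val ↔ ¬ Even x.val := by
  rw [← not_iff_not, not_not, ← even_val_add_one, sub_add_cancel]

theorem cartan_add_add (i k c : ZMod (2*n+2)) : cartan n (i + c) (k + c) = cartan n i k := by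
  simp only [cartan, add_left_inj, add_right_comm _ c 1]

theorem cartan_neg_neg (i k : ZMod (2*n+2)) : cartan n (-i) (-k) = cartan n i k := by
  have : (-i = -k + 1 ∨ -k = -i + 1) ↔ (i = k + 1 ∨ k = i + 1) := by
    rw [or_comm]
    refine or_congr ?_ ?_ <;> constructor <;> intro h <;> linear_combination h
  simp only [cartan, neg_inj, this]

theorem rcoef_div {ι : Type*} {α φ : ι → K} {j : ι} (hφ : φ j ≠ 0) :
    rcoef α (α / φ) j = α j / rcoef α φ j := by
  simp only [rcoef, Pi.div_apply]
  field_simp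
  ring

theorem rα_self {α : ZMod (2*n+2) → K} {j : ZMod (2*n+2)} (hα : α j ≠ 0) :
    rα n j α j = (α j)⁻¹ := by
  simp only [rα, cartan, if_true]
  field_simp

theorem rα_add_one (α : ZMod (2*n+2) → K) (j : ZMod (2*n+2)) :
    rα n j α (j + 1) = α (j + 1) * α j := by
  simp [rα, cartan]

theorem rα_sub_one (α : ZMod (2*n+2) → K) (j : ZMod (2*n+2)) :
    rα n j α (j - 1) = α (j - 1) * α j := by
  simp [rα, cartan, self_ne_sub_one]

theorem rα_of_ne (α : ZMod (2*n+2) → K) {i j : ZMod (2*n+2)} (h₀ : i ≠ j) (h₁ : i ≠ j + 1)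
    (h₂ : i ≠ j - 1) : rα n j α i = α i := by
  have : j ≠ i + 1 := fun h => h₂ (by rw [h, add_sub_cancel_right])
  simp [rα, cartan, h₀.symm, h₁, this]

theorem rφ_self (α φ : ZMod (2*n+2) → K) (j : ZMod (2*n+2)) : rφ n j α φ j = φ j / α j := by
  simp [rφ, self_ne_sub_one, div_eq_mul_inv]

theorem rφ_add_one (hn : 1 ≤ n) (α φ : ZMod (2*n+2) → K) (j : ZMod (2*n+2)) :
    rφ n j α φ (j + 1) = φ (j + 1) * α j / rcoef α φ j := by
  simp [rφ, rcoef, add_one_ne_sub_one hn, div_eq_mul_inv]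

theorem rφ_sub_one (hn : 1 ≤ n) (α φ : ZMod (2*n+2) → K) (j : ZMod (2*n+2)) :
    rφ n j α φ (j - 1) = φ (j - 1) * rcoef α φ j := by
  simp [rφ, rcoef, (add_one_ne_sub_one hn j).symm]

theorem rφ_of_ne (α φ : ZMod (2*n+2) → K) {i j : ZMod (2*n+2)} (h₀ : i ≠ j) (h₁ : i ≠ j + 1)
    (h₂ : i ≠ j - 1) : rφ n j α φ i = φ i := by
  simp [rφ, h₀, h₁, h₂]

theorem rα_comp_add (α : ZMod (2*n+2) → K) (j k c : ZMod (2*n+2)) :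
    rα n j (fun x => α (x + c)) k = rα n (j + c) α (k + c) := by
  simp only [rα, cartan_add_add]

theorem rφ_comp_add (α φ : ZMod (2*n+2) → K) (j k c : ZMod (2*n+2)) :
    rφ n j (fun x => α (x + c)) (fun x => φ (x + c)) k = rφ n (j + c) α φ (k + c) := by
  simp only [rφ, add_left_inj, add_right_comm _ c 1, ← sub_add_eq_add_sub]

theorem rα_comp_neg (α : ZMod (2*n+2) → K) (j k : ZMod (2*n+2)) :
    rα n j (fun x => α (-x)) k = rα n (-j) α (-k) := by
  simp only [rα, cartan_neg_neg]

theorem rT_piT (j : ZMod (2*n+2)) (T : (ZMod (2*n+2) → K) × (ZMod (2*n+2) → K)) :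
    rT n j (piT n T) = piT n (rT n (j + 1) T) :=
  Prod.ext (funext fun k => rα_comp_add T.1 j k 1) (funext fun k => rφ_comp_add T.1 T.2 j k 1)

theorem piT'_eq_piT_dualT (T : (ZMod (2*n+2) → K) × (ZMod (2*n+2) → K)) :
    piT' n T = piT n (dualT T) :=
  rfl

theorem rT_dualT (hn : 1 ≤ n) {α φ : ZMod (2*n+2) → K} {j : ZMod (2*n+2)} (hα : α j ≠ 0)
    (hφ : φ j ≠ 0) : rT n j (dualT (α, φ)) = dualT (rT n j (α, φ)) := by
  refine Prod.ext rfl (funext fun k => ?_)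
  change rφ n j α (α / φ) k = rα n j α k / rφ n j α φ k
  rcases eq_or_ne k j with rfl | h₀
  · rw [rφ_self, rα_self hα, rφ_self, Pi.div_apply]
    field_simp
  rcases eq_or_ne k (j + 1) with rfl | h₁
  · rw [rφ_add_one hn, rα_add_one, rφ_add_one hn, rcoef_div hφ, Pi.div_apply]
    field_simp
  rcases eq_or_ne k (j - 1) with rfl | h₂
  · rw [rφ_sub_one hn, rα_sub_one, rφ_sub_one hn, rcoef_div hφ, Pi.div_apply]
    field_simp
  · rw [rφ_of_ne _ _ h₀ h₁ h₂, rα_of_ne _ h₀ h₁ h₂, rφ_of_ne _ _ h₀ h₁ h₂, Pi.div_apply]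

theorem rT_rhoT (hn : 1 ≤ n) {α φ : ZMod (2*n+2) → K} {j : ZMod (2*n+2)} (hα : α (-j) ≠ 0)
    (hφ : φ (-j) ≠ 0) : rT n j (rhoT n (α, φ)) = rhoT n (rT n (-j) (α, φ)) := by
  refine Prod.ext (funext fun k => rα_comp_neg α j k) (funext fun k => ?_)
  change rφ n j (fun x => α (-x)) (fun x => if Even x.val then α (-x) / φ (-x) else φ (-x)) k
    = if Even k.val then rα n (-j) α (-k) / rφ n (-j) α φ (-k) else rφ n (-j) α φ (-k)
  rcases eq_or_ne k j with rfl | h₀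
  · rw [rφ_self, rα_self hα, rφ_self]
    split_ifs <;> field_simp
  rcases eq_or_ne k (j + 1) with rfl | h₁
  · have : -(j + 1) = -j - 1 := neg_add' j 1
    rw [rφ_add_one hn, this, rα_sub_one, rφ_sub_one hn]
    by_cases hp : Even j.val
    · simp only [even_val_add_one, hp, not_true_eq_false, ↓reduceIte, rcoef]
      field_simp
      ring
    · simp only [even_val_add_one, hp, not_false_eq_true, ↓reduceIte, rcoef]
      field_simp
  rcases eq_or_ne k (j - 1) with rfl | h₂
  · have : -(j - 1) = -j + 1 := by ring
    rw [rφ_sub_one hn, this, rα_add_one, rφ_add_one hn]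
    by_cases hp : Even j.val
    · simp only [even_val_sub_one, hp, not_true_eq_false, ↓reduceIte, rcoef]
      field_simp
      ring
    · simp only [even_val_sub_one, hp, not_false_eq_true, ↓reduceIte, rcoef]
      field_simp
  · have h₀' : -k ≠ -j := neg_injective.ne h₀
    have h₁' : -k ≠ -j - 1 := fun h => h₁ (by linear_combination -h)
    have h₂' : -k ≠ -j + 1 := fun h => h₂ (by linear_combination -h)
    rw [rφ_of_ne _ _ h₀ h₁ h₂, rα_of_ne _ h₀' h₂' h₁', rφ_of_ne _ _ h₀' h₂' h₁']

end

/-- the intertwining relations `r_i ∘ π = π ∘ r_{i+1}`,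
`r_i ∘ π' = π' ∘ r_{i+1}` and `r_i ∘ ρ = ρ ∘ r_{-i}` (rightmost map applied first). -/
theorem stmt14 (n : ℕ) (hn : 1 ≤ n) (K : Type*) [Field K]
    (α φ : ZMod (2*n+2) → K) (h : GoodT n (α, φ)) :
    ∀ i : ZMod (2*n+2),
      GoodT n (piT n (α, φ)) → GoodT n (piT' n (α, φ)) → GoodT n (rhoT n (α, φ)) →
      GoodT n (rT n (i+1) (α, φ)) → GoodT n (rT n (-i) (α, φ)) →
      rT n i (piT n (α, φ)) = piT n (rT n (i+1) (α, φ))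
      ∧ rT n i (piT' n (α, φ)) = piT' n (rT n (i+1) (α, φ))
      ∧ rT n i (rhoT n (α, φ)) = rhoT n (rT n (-i) (α, φ)) := by
  intro i _ _ _ _ _
  have hα : ∀ j, α j ≠ 0 := fun j => (h j).1
  have hφ : ∀ j, φ j ≠ 0 := fun j => (h j).2.1
  refine ⟨rT_piT i (α, φ), ?_, rT_rhoT hn (hα (-i)) (hφ (-i))⟩
  rw [piT'_eq_piT_dualT, rT_piT, rT_dualT hn (hα (i + 1)) (hφ (i + 1)), piT'_eq_piT_dualT]
end
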